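/- (Stabilization of the lcm-filtration of the cut ideal of the complete graph.) Let n ≥ 2 and let I_n be the cut ideal of the complete graph K_n, minimally generated by the 2^{n−1} − 1 cut monomials m_{{A,Aᶜ}} over unordered 2-partitions of Fin n. For 1 ≤ j ≤ 2^{n−1} − 1, let I_{n,j} be the j-fold lcm-ideal of I_n, generated by the lcm's of all j-element subsets of the minimal generators. Then for every k with 1 ≤ k ≤ n − 1 and every j with 2^{k−1} ≤ j ≤ 2^k − 1, one has I_{n,j} = P_{n,k+1}, the ideal generated by the partition monomials of all partitions of Fin n into k+1 nonempty blocks; in particular I_{n,2^{k−1}} = I_{n,2^{k−1}+1} = ⋯ = I_{n,2^k − 1} = P_{n,k+1}. -/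

import Mathlib

open MvPolynomial

/-- The edges of the complete graph `K_n`: the 2-element subsets of `Fin n`. -/
abbrev KEdge (n : ℕ) := {e : Finset (Fin n) // e.card = 2}

/-- The support of the partition monomial of a partition `π` of `Fin n`: the edges whose
two endpoints lie in distinct blocks of `π`. -/
def partitionSupport (n : ℕ) (π : Finpartition (Finset.univ : Finset (Fin n))) :
    Finset (KEdge n) :=
  Finset.univ.filter fun e : KEdge n => ∀ b ∈ π.parts, ¬ (e : Finset (Fin n)) ⊆ b

/-- The squarefree monomial with support `S` in the polynomial ring on the edges. -/
noncomputable def edgeMonomial (n : ℕ) (K : Type*) [Field K] (S : Finset (KEdge n)) :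
    MvPolynomial (KEdge n) K :=
  ∏ e ∈ S, X e

/-- `P_{n,s}`: the ideal generated by the partition monomials of all partitions of
`Fin n` into `s` nonempty blocks. -/
noncomputable def partitionIdeal (n : ℕ) (K : Type*) [Field K] (s : ℕ) :
    Ideal (MvPolynomial (KEdge n) K) :=
  Ideal.span {m | ∃ π : Finpartition (Finset.univ : Finset (Fin n)),
    π.parts.card = s ∧ m = edgeMonomial n K (partitionSupport n π)}

/-- The supports of the cut monomials of `K_n`, i.e. of the partition monomials of the
unordered 2-partitions of `Fin n`; these are the minimal generators of the cut ideal
`I_n = P_{n,2}`. -/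
def cutSupports (n : ℕ) : Set (Finset (KEdge n)) :=
  {S | ∃ π : Finpartition (Finset.univ : Finset (Fin n)),
    π.parts.card = 2 ∧ S = partitionSupport n π}

/-- `I_{n,j}`: the `j`-fold lcm-ideal of the cut ideal `I_n`, generated by the lcm's of
all `j`-element subsets of the set of cut monomials (for squarefree monomials, the lcm
has support the union of the supports). -/
noncomputable def cutLcmIdeal (n : ℕ) (K : Type*) [Field K] (j : ℕ) :
    Ideal (MvPolynomial (KEdge n) K) :=
  Ideal.span {m | ∃ σ : Finset (Finset (KEdge n)),
    ↑σ ⊆ cutSupports n ∧ σ.card = j ∧ m = edgeMonomial n K (σ.sup id)}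

/-! The lcm of the cut monomials of a family `τ` of cuts is the partition monomial of their
common refinement `τ.inf id`, and a partition monomial determines its partition. Distinct cuts
coarser than a partition `ρ` with `r` blocks are determined by the nonempty sets of blocks lying on
the side away from a fixed block, so there are at most `2^(r-1) - 1` of them; hence `2^(k-1) ≤ j`
forces the common refinement of `j` cuts to have more than `k` blocks, and merging blocks gives a
`(k+1)`-partition whose monomial divides the lcm. Conversely, if `π` has `k + 1` blocks and `b₀` is
one of them, then `π` is the common refinement of the cuts `{⋃ U, (⋃ U)ᶜ}` for any family of
nonempty sets `U` of blocks other than `b₀` containing all singletons, and such families of every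
size `j` with `k ≤ j ≤ 2^k - 1` exist. -/

open Finset

namespace Finpartition

section GeneralizedBooleanAlgebra

variable {α : Type*} [GeneralizedBooleanAlgebra α] [DecidableEq α] {a b : α}

theorem card_parts_extendOfLE_of_lt (P : Finpartition a) (hab : a < b) :
    #(P.extendOfLE hab.le).parts = #P.parts + 1 := by
  rw [extendOfLE, dif_neg (sdiff_eq_bot_iff.not.mpr (not_le_of_gt hab)), card_extend]

end GeneralizedBooleanAlgebra

variable {α : Type*} [DecidableEq α] {s : Finset α}

theorem part_subset_part_of_le {ρ P : Finpartition s} (h : ρ ≤ P) {x : α} (hx : x ∈ s) :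
    ρ.part x ⊆ P.part x := by
  obtain ⟨c, hc, hρc⟩ := h (ρ.part_mem.mpr hx)
  rwa [P.part_eq_of_mem hc (hρc (ρ.mem_part hx))]

theorem parts_eq_pair_sdiff {P : Finpartition s} (hP : #P.parts = 2) {c : Finset α}
    (hc : c ∈ P.parts) : P.parts = {c, s \ c} := by
  obtain ⟨d, hd, hdc⟩ := exists_mem_ne (hP ▸ one_lt_two) c
  have hcd : P.parts = {c, d} :=
    (eq_of_subset_of_card_le (insert_subset hc (singleton_subset_iff.mpr hd))
      (by rw [hP, card_pair hdc.symm])).symm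
  have hsup : c ∪ d = s := by simpa [hcd] using P.sup_parts
  have hdisj : Disjoint d c := P.disjoint hd hc hdc
  rw [hcd, ← hsup, union_sdiff_left, hdisj.sdiff_eq_left]

theorem eq_of_part_eq_of_card_parts_eq_two {P Q : Finpartition s} (hP : #P.parts = 2)
    (hQ : #Q.parts = 2) {x : α} (hx : x ∈ s) (h : P.part x = Q.part x) : P = Q := by
  ext1
  rw [parts_eq_pair_sdiff hP (P.part_mem.mpr hx), parts_eq_pair_sdiff hQ (Q.part_mem.mpr hx), h]

theorem sup_ssubset_of_mem_of_notMem {ρ : Finpartition s} {T : Finset (Finset α)}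
    (hT : T ⊆ ρ.parts) {b : Finset α} (hb : b ∈ ρ.parts) (hbT : b ∉ T) : T.sup id ⊂ s := by
  refine ssubset_of_subset_of_ne (Finset.sup_le fun c hc => ρ.le (hT hc)) fun hTs => ?_
  have hdisj : Disjoint b (T.sup id) := ρ.supIndep hT hb hbT
  rw [hTs] at hdisj
  exact ρ.ne_empty hb (disjoint_self.mp (hdisj.mono_right (ρ.le hb)))

theorem le_extendOfLE_of_subset {ρ : Finpartition s} {T : Finset (Finset α)}
    (hT : T ⊆ ρ.parts) {Q : Finpartition (T.sup id)} (hQ : ∀ b ∈ T, ∃ c ∈ Q.parts, b ⊆ c)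
    (hlt : T.sup id ⊂ s) : ρ ≤ Q.extendOfLE hlt.le := by
  intro b hb
  rw [parts_extendOfLE_of_lt _ hlt]
  by_cases hbT : b ∈ T
  · obtain ⟨c, hc, hbc⟩ := hQ b hbT
    exact ⟨c, mem_insert_of_mem hc, hbc⟩
  · exact ⟨s \ T.sup id, mem_insert_self _ _,
      subset_sdiff.mpr ⟨ρ.le hb, ρ.supIndep hT hb hbT⟩⟩

theorem exists_le_card_parts_eq (ρ : Finpartition s) {m : ℕ} (hm : 0 < m)
    (hmρ : m ≤ #ρ.parts) : ∃ π : Finpartition s, ρ ≤ π ∧ #π.parts = m := by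
  obtain ⟨T, hT, hTcard⟩ := exists_subset_card_eq (show m - 1 ≤ #ρ.parts by omega)
  obtain ⟨b, hb, hbT⟩ := exists_of_ssubset
    (ssubset_of_subset_of_ne hT (by rintro rfl; omega))
  have hlt := sup_ssubset_of_mem_of_notMem hT hb hbT
  refine ⟨(ρ.ofSubset hT rfl).extendOfLE hlt.le,
    le_extendOfLE_of_subset hT (fun b hb => ⟨b, hb, subset_rfl⟩) hlt, ?_⟩
  rw [card_parts_extendOfLE_of_lt _ hlt, ofSubset_parts]
  omega

theorem card_le_of_forall_le_of_card_parts_eq_two {ρ : Finpartition s}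
    {τ : Finset (Finpartition s)} (hτ : ∀ P ∈ τ, ρ ≤ P ∧ #P.parts = 2) :
    #τ ≤ 2 ^ (#ρ.parts - 1) - 1 := by
  obtain rfl | ⟨P₀, hP₀⟩ := τ.eq_empty_or_nonempty
  · simp
  obtain ⟨x₀, hx₀⟩ : s.Nonempty := by
    obtain ⟨c, hc⟩ := card_pos.mp ((hτ P₀ hP₀).2 ▸ two_pos)
    exact (P₀.nonempty_of_mem_parts hc).mono (P₀.le hc)
  -- A two-block partition coarser than `ρ` is determined by the blocks of `ρ` outside its
  -- block containing `x₀`.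
  let f : Finpartition s → Finset (Finset α) := fun P => {b ∈ ρ.parts | ¬b ⊆ P.part x₀}
  have mem_part_iff : ∀ P ∈ τ, ∀ x ∈ s, x ∈ P.part x₀ ↔ ρ.part x ∉ f P := by
    intro P hP x hx
    simp only [f, mem_filter, ρ.part_mem.mpr hx, true_and, not_not]
    exact ⟨fun h => (part_subset_part_of_le (hτ P hP).1 hx).trans
      ((P.mem_part_iff_part_eq_part hx hx₀).mp h).subset, fun h => h (ρ.mem_part hx)⟩
  have maps : Set.MapsTo f τ ((ρ.parts.erase (ρ.part x₀)).powerset.erase ∅) := by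
    intro P hP
    have hcompl : s \ P.part x₀ ∈ P.parts := by
      rw [parts_eq_pair_sdiff (hτ P hP).2 (P.part_mem.mpr hx₀)]
      exact mem_insert_of_mem (mem_singleton_self _)
    obtain ⟨y, hy⟩ := P.nonempty_of_mem_parts hcompl
    rw [mem_sdiff] at hy
    refine mem_erase.mpr ⟨ne_empty_of_mem (a := ρ.part y) ?_, mem_powerset.mpr fun b hb => ?_⟩
    · exact not_not.mp (mt (mem_part_iff P hP y hy.1).mpr hy.2)
    · refine mem_erase.mpr ⟨?_, (mem_filter.mp hb).1⟩
      rintro rfl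
      exact (mem_part_iff P hP x₀ hx₀).mp (P.mem_part hx₀) hb
  have inj : Set.InjOn f τ := by
    intro P hP Q hQ hPQ
    refine eq_of_part_eq_of_card_parts_eq_two (hτ P hP).2 (hτ Q hQ).2 hx₀ (ext fun x => ?_)
    by_cases hx : x ∈ s
    · rw [mem_part_iff P hP x hx, mem_part_iff Q hQ x hx, hPQ]
    · exact iff_of_false (fun h => hx (P.part_subset _ h)) (fun h => hx (Q.part_subset _ h))
  calc #τ ≤ #((ρ.parts.erase (ρ.part x₀)).powerset.erase ∅) :=
        card_le_card_of_injOn f maps inj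
    _ = 2 ^ (#ρ.parts - 1) - 1 := by
      rw [card_erase_of_mem (empty_mem_powerset _), card_powerset,
        card_erase_of_mem (ρ.part_mem.mpr hx₀)]

theorem sup_id_injOn (ρ : Finpartition s) :
    Set.InjOn (fun T : Finset (Finset α) => T.sup id) ρ.parts.powerset := by
  have key : ∀ T ∈ ρ.parts.powerset, ∀ T' ∈ ρ.parts.powerset,
      T.sup id ⊆ T'.sup id → T ⊆ T' := by
    intro T hT T' hT' h b hb
    have hbρ := mem_powerset.mp hT hb
    obtain ⟨x, hx⟩ := ρ.nonempty_of_mem_parts hbρ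
    obtain ⟨b', hb', hxb'⟩ := mem_sup.mp (h (mem_sup.mpr ⟨b, hb, hx⟩))
    rwa [ρ.eq_of_mem_parts hbρ (mem_powerset.mp hT' hb') hx hxb']
  exact fun T hT T' hT' h => (key T hT T' hT' h.le).antisymm (key T' hT' T hT h.ge)

theorem eq_of_forall_part_eq {P Q : Finpartition s} (h : ∀ x, P.part x = Q.part x) :
    P = Q := by
  have key : ∀ {P Q : Finpartition s}, (∀ x, P.part x = Q.part x) → P.parts ⊆ Q.parts := by
    intro P Q h b hb
    obtain ⟨x, hx⟩ := P.nonempty_of_mem_parts hb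
    rw [← P.part_eq_of_mem hb hx, h]
    exact Q.part_mem.mpr (P.le hb hx)
  exact Finpartition.ext ((key h).antisymm (key fun x => (h x).symm))

theorem part_inf (P Q : Finpartition s) {x : α} (hx : x ∈ s) :
    (P ⊓ Q).part x = P.part x ∩ Q.part x := by
  refine (P ⊓ Q).part_eq_of_mem ?_ (mem_inter.mpr ⟨P.mem_part hx, Q.mem_part hx⟩)
  rw [parts_inf]
  exact mem_erase.mpr ⟨ne_empty_of_mem (mem_inter.mpr ⟨P.mem_part hx, Q.mem_part hx⟩),
    mem_image.mpr ⟨(P.part x, Q.part x),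
      mem_product.mpr ⟨P.part_mem.mpr hx, Q.part_mem.mpr hx⟩, rfl⟩⟩

theorem part_top {x : α} (hx : x ∈ s) : (⊤ : Finpartition s).part x = s :=
  mem_singleton.mp (parts_top_subset s ((⊤ : Finpartition s).part_mem.mpr hx))

section Cut

variable [Fintype α]

/-- The partition `{A, Aᶜ}` of `α`; it degenerates to `{univ}` when `A` or `Aᶜ` is empty. -/
def cut (A : Finset α) : Finpartition (univ : Finset α) :=
  ofErase {A, Aᶜ} (supIndep_iff_pairwiseDisjoint.mpr (by
    rw [coe_pair]
    exact Set.pairwise_pair.mpr fun _ => ⟨disjoint_compl_right, disjoint_compl_left⟩))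
    (by simp)

theorem mem_parts_cut {A b : Finset α} :
    b ∈ (cut A).parts ↔ b.Nonempty ∧ (b = A ∨ b = Aᶜ) := by
  simp [cut, nonempty_iff_ne_empty]

theorem card_parts_cut {A : Finset α} (hA : A.Nonempty) (hAc : Aᶜ.Nonempty) :
    #(cut A).parts = 2 := by
  obtain ⟨x, hx⟩ := hA
  have hAAc : A ≠ Aᶜ := fun h => mem_compl.mp (h ▸ hx : x ∈ Aᶜ) hx
  have hempty : ⊥ ∉ ({A, Aᶜ} : Finset (Finset α)) := by
    simp [hAc.ne_empty.symm, (ne_empty_of_mem hx).symm]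
  rw [cut, ofErase_parts, erase_eq_of_notMem hempty, card_pair hAAc]

theorem part_cut_of_mem {A : Finset α} {x : α} (hx : x ∈ A) : (cut A).part x = A :=
  (cut A).part_eq_of_mem (mem_parts_cut.mpr ⟨⟨x, hx⟩, Or.inl rfl⟩) hx

theorem part_cut_of_notMem {A : Finset α} {x : α} (hx : x ∉ A) : (cut A).part x = Aᶜ :=
  (cut A).part_eq_of_mem (mem_parts_cut.mpr ⟨⟨x, mem_compl.mpr hx⟩, Or.inr rfl⟩)
    (mem_compl.mpr hx)

theorem le_cut_sup {ρ : Finpartition (univ : Finset α)} {T : Finset (Finset α)}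
    (hT : T ⊆ ρ.parts) : ρ ≤ cut (T.sup id) := by
  intro b hb
  have hbne := ρ.nonempty_of_mem_parts hb
  by_cases hbT : b ∈ T
  · exact ⟨T.sup id, mem_parts_cut.mpr ⟨hbne.mono (le_sup (f := id) hbT), Or.inl rfl⟩,
      le_sup (f := id) hbT⟩
  · have hsub : b ⊆ (T.sup id)ᶜ :=
      subset_compl_iff_disjoint_right.mpr (ρ.supIndep hT hb hbT)
    exact ⟨(T.sup id)ᶜ, mem_parts_cut.mpr ⟨hbne.mono hsub, Or.inr rfl⟩, hsub⟩

end Cut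

end Finpartition

section PartitionSupport

variable {n : ℕ}

open Finpartition

theorem mem_partitionSupport {π : Finpartition (univ : Finset (Fin n))} {e : KEdge n} :
    e ∈ partitionSupport n π ↔ ∀ b ∈ π.parts, ¬(e : Finset (Fin n)) ⊆ b := by
  simp [partitionSupport]

theorem mem_partitionSupport_iff_notMem_part {π : Finpartition (univ : Finset (Fin n))}
    {e : KEdge n} {x y : Fin n} (he : (e : Finset (Fin n)) = {x, y}) :
    e ∈ partitionSupport n π ↔ y ∉ π.part x := by
  rw [mem_partitionSupport, he]
  simp only [insert_subset_iff, singleton_subset_iff, not_and]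
  refine ⟨fun h hy => h _ (π.part_mem.mpr (mem_univ x)) (π.mem_part (mem_univ x)) hy,
    fun h b hb hxb hyb => h ?_⟩
  rwa [π.part_eq_of_mem hb hxb]

theorem mem_partitionSupport_cut {A : Finset (Fin n)} {e : KEdge n} {x y : Fin n}
    (he : (e : Finset (Fin n)) = {x, y}) :
    e ∈ partitionSupport n (cut A) ↔ (x ∈ A ↔ y ∉ A) := by
  rw [mem_partitionSupport_iff_notMem_part he]
  by_cases hx : x ∈ A
  · simp [part_cut_of_mem hx, hx]
  · simp [part_cut_of_notMem hx, hx]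

theorem partitionSupport_injective : Function.Injective (partitionSupport n) := by
  intro P Q h
  have hpart : ∀ x, P.part x = Q.part x := by
    intro x
    ext y
    rcases eq_or_ne x y with rfl | hxy
    · simp only [P.mem_part (mem_univ x), Q.mem_part (mem_univ x)]
    have he : ((⟨{x, y}, card_pair hxy⟩ : KEdge n) : Finset (Fin n)) = {x, y} := rfl
    rw [← not_iff_not, ← mem_partitionSupport_iff_notMem_part he,
      ← mem_partitionSupport_iff_notMem_part he, h]
  exact eq_of_forall_part_eq hpart

theorem partitionSupport_antitone : Antitone (partitionSupport n) := by
  intro ρ π h e he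
  rw [mem_partitionSupport] at he ⊢
  intro b hb heb
  obtain ⟨c, hc, hbc⟩ := h hb
  exact he c hc (heb.trans hbc)

theorem partitionSupport_inf (P Q : Finpartition (univ : Finset (Fin n))) :
    partitionSupport n (P ⊓ Q) = partitionSupport n P ∪ partitionSupport n Q := by
  ext e
  obtain ⟨x, y, -, he⟩ := card_eq_two.mp e.2
  simp only [mem_union, mem_partitionSupport_iff_notMem_part he, part_inf P Q (mem_univ x),
    mem_inter, not_and_or]

theorem partitionSupport_top : partitionSupport n ⊤ = ∅ := by
  refine eq_empty_of_forall_notMem fun e => ?_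
  obtain ⟨x, y, -, he⟩ := card_eq_two.mp e.2
  rw [mem_partitionSupport_iff_notMem_part he, part_top (mem_univ x), not_not]
  exact mem_univ y

theorem partitionSupport_finset_inf (τ : Finset (Finpartition (univ : Finset (Fin n)))) :
    partitionSupport n (τ.inf id) = τ.sup (partitionSupport n) := by
  induction τ using Finset.induction_on with
  | empty => exact partitionSupport_top
  | insert P τ _ ih => rw [inf_insert, sup_insert, id, partitionSupport_inf, ih]; rfl

theorem partitionSupport_subset_sup_cut (π : Finpartition (univ : Finset (Fin n)))
    (b₀ : Finset (Fin n)) :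
    partitionSupport n π ⊆ (π.parts.erase b₀).sup fun b => partitionSupport n (cut b) := by
  intro e he
  obtain ⟨x, y, -, hexy⟩ := card_eq_two.mp e.2
  -- the cut at the block of an endpoint outside `b₀` separates the endpoints
  have key : ∀ {x y : Fin n}, (e : Finset (Fin n)) = {x, y} → π.part x ≠ b₀ →
      e ∈ (π.parts.erase b₀).sup fun b => partitionSupport n (cut b) := by
    intro x y hexy hx
    refine mem_sup.mpr ⟨π.part x, mem_erase.mpr ⟨hx, π.part_mem.mpr (mem_univ x)⟩, ?_⟩
    rw [mem_partitionSupport_cut hexy]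
    exact iff_of_true (π.mem_part (mem_univ x))
      ((mem_partitionSupport_iff_notMem_part hexy).mp he)
  by_cases hx : π.part x = b₀
  · refine key (hexy.trans (pair_comm x y)) fun hy => ?_
    refine (mem_partitionSupport_iff_notMem_part hexy).mp he ?_
    rw [hx, ← hy]
    exact π.mem_part (mem_univ y)
  · exact key hexy hx

theorem exists_cuts_inf_eq (π : Finpartition (univ : Finset (Fin n))) {k j : ℕ}
    (hπ : #π.parts = k + 1) (hkj : k ≤ j) (hj : j ≤ 2 ^ k - 1) :
    ∃ τ : Finset (Finpartition (univ : Finset (Fin n))),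
      (∀ P ∈ τ, #P.parts = 2) ∧ #τ = j ∧ τ.inf id = π := by
  obtain ⟨b₀, hb₀⟩ : π.parts.Nonempty := card_pos.mp (by omega)
  obtain ⟨x₀, hx₀⟩ := π.nonempty_of_mem_parts hb₀
  set R := π.parts.erase b₀
  have hR : #R = k := by rw [card_erase_of_mem hb₀, hπ, Nat.add_sub_cancel]
  obtain ⟨F, hsingle, hF, hFcard⟩ := exists_subsuperset_card_eq
    (s := R.image singleton) (t := R.powerset.erase ∅) (n := j)
    (fun U hU => by
      obtain ⟨b, hb, rfl⟩ := mem_image.mp hU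
      exact mem_erase.mpr ⟨singleton_ne_empty b, mem_powerset.mpr (singleton_subset_iff.mpr hb)⟩)
    (by rwa [card_image_of_injective _ singleton_injective, hR])
    (by rwa [card_erase_of_mem (empty_mem_powerset R), card_powerset, hR])
  have hFR : ∀ U ∈ F, U ⊆ R := fun U hU => mem_powerset.mp (mem_of_mem_erase (hF hU))
  have hFπ : ∀ U ∈ F, U ⊆ π.parts := fun U hU => (hFR U hU).trans (erase_subset _ _)
  have hx₀F : ∀ U ∈ F, x₀ ∉ U.sup id := fun U hU =>
    disjoint_left.mp (π.supIndep (hFπ U hU) hb₀ fun h => (mem_erase.mp (hFR U hU h)).1 rfl) hx₀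
  refine ⟨F.image fun U => cut (U.sup id), ?_, ?_, partitionSupport_injective ?_⟩
  · rintro _ hP
    obtain ⟨U, hU, rfl⟩ := mem_image.mp hP
    obtain ⟨b, hb⟩ := nonempty_iff_ne_empty.mpr (mem_erase.mp (hF hU)).1
    exact card_parts_cut ((π.nonempty_of_mem_parts (hFπ U hU hb)).mono (le_sup (f := id) hb))
      ⟨x₀, mem_compl.mpr (hx₀F U hU)⟩
  · rw [card_image_of_injOn, hFcard]
    intro U hU U' hU' h
    have hcompl : (U.sup id)ᶜ = (U'.sup id)ᶜ := by
      rw [← part_cut_of_notMem (hx₀F U hU), ← part_cut_of_notMem (hx₀F U' hU')]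
      exact congrArg (fun P => P.part x₀) h
    exact π.sup_id_injOn (mem_powerset.mpr (hFπ U hU)) (mem_powerset.mpr (hFπ U' hU'))
      (compl_inj_iff.mp hcompl)
  rw [partitionSupport_finset_inf, sup_image]
  refine le_antisymm
    (Finset.sup_le fun U hU => partitionSupport_antitone (le_cut_sup (hFπ U hU)))
    ((partitionSupport_subset_sup_cut π b₀).trans (Finset.sup_le fun b hb => ?_))
  refine le_sup_of_le (hsingle (mem_image_of_mem _ hb)) ?_
  rw [Function.comp_apply, sup_singleton, id]

end PartitionSupport

section Ideals

variable {n : ℕ} {K : Type*} [Field K]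

theorem edgeMonomial_dvd_edgeMonomial {S T : Finset (KEdge n)} (h : S ⊆ T) :
    edgeMonomial n K S ∣ edgeMonomial n K T :=
  prod_dvd_prod_of_subset S T _ h

theorem cutLcmIdeal_eq_span_inf (j : ℕ) :
    cutLcmIdeal n K j = Ideal.span {m | ∃ τ : Finset (Finpartition (univ : Finset (Fin n))),
      (∀ P ∈ τ, #P.parts = 2) ∧ #τ = j ∧
        m = edgeMonomial n K (partitionSupport n (τ.inf id))} := by
  refine congrArg Ideal.span (Set.ext fun m => ⟨?_, ?_⟩)
  · rintro ⟨σ, hσ, rfl, rfl⟩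
    set τ : Finset (Finpartition (univ : Finset (Fin n))) :=
      {P | #P.parts = 2 ∧ partitionSupport n P ∈ σ}
    have himage : τ.image (partitionSupport n) = σ := by
      ext S
      simp only [τ, mem_image, mem_filter, mem_univ, true_and]
      refine ⟨fun ⟨P, ⟨_, hP⟩, hPS⟩ => hPS ▸ hP, fun hS => ?_⟩
      obtain ⟨P, hP, rfl⟩ := hσ hS
      exact ⟨P, ⟨hP, hS⟩, rfl⟩
    refine ⟨τ, fun P hP => (mem_filter.mp hP).2.1, ?_, ?_⟩
    · rw [← himage, card_image_of_injective _ partitionSupport_injective]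
    · rw [← himage, sup_image, Function.id_comp, partitionSupport_finset_inf]
  · rintro ⟨τ, hτ, rfl, rfl⟩
    refine ⟨τ.image (partitionSupport n), fun S hS => ?_,
      card_image_of_injective _ partitionSupport_injective, ?_⟩
    · obtain ⟨P, hP, rfl⟩ := mem_image.mp hS
      exact ⟨P, hτ P hP, rfl⟩
    · rw [sup_image, Function.id_comp, partitionSupport_finset_inf]

end Ideals

theorem cut_ideal_lcm_filtration_stabilizes_general (n : ℕ) (K : Type*) [Field K] (k j : ℕ)
    (hj1 : 2 ^ (k - 1) ≤ j) (hj2 : j ≤ 2 ^ k - 1) :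
    cutLcmIdeal n K j = partitionIdeal n K (k + 1) := by
  have hkj : k ≤ j := by
    have := Nat.lt_two_pow_self (n := k - 1)
    omega
  rw [cutLcmIdeal_eq_span_inf]
  apply le_antisymm
  · refine Ideal.span_le.mpr ?_
    rintro _ ⟨τ, hτ, rfl, rfl⟩
    set ρ := τ.inf id
    have hcount : #τ ≤ 2 ^ (#ρ.parts - 1) - 1 :=
      Finpartition.card_le_of_forall_le_of_card_parts_eq_two fun P hP =>
        ⟨Finset.inf_le (f := id) hP, hτ P hP⟩
    have hk : k + 1 ≤ #ρ.parts := by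
      have := Nat.one_le_two_pow (n := #ρ.parts - 1)
      have : k - 1 < #ρ.parts - 1 := (Nat.pow_lt_pow_iff_right one_lt_two).mp (by omega)
      omega
    obtain ⟨π, hρπ, hπ⟩ := ρ.exists_le_card_parts_eq (Nat.succ_pos k) hk
    exact Ideal.mem_of_dvd _ (edgeMonomial_dvd_edgeMonomial (partitionSupport_antitone hρπ))
      (Ideal.subset_span ⟨π, hπ, rfl⟩)
  · refine Ideal.span_le.mpr ?_
    rintro _ ⟨π, hπ, rfl⟩
    obtain ⟨τ, hτ, rfl, rfl⟩ := exists_cuts_inf_eq π hπ hkj hj2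
    exact Ideal.subset_span ⟨τ, hτ, rfl, rfl⟩

/-- Stabilization of the lcm-filtration of the cut ideal of the complete graph `K_n`
(Theorem 3.1 of [FEH2]): for `1 ≤ k ≤ n − 1` and `2^{k−1} ≤ j ≤ 2^k − 1`, the `j`-fold
lcm-ideal of the cut ideal equals `P_{n,k+1}`; in particular
`I_{n,2^{k−1}} = I_{n,2^{k−1}+1} = ⋯ = I_{n,2^k−1} = P_{n,k+1}`. -/
theorem cut_ideal_lcm_filtration_stabilizes (n : ℕ) (hn : 2 ≤ n)
    (K : Type*) [Field K] (k j : ℕ) (hk1 : 1 ≤ k) (hk2 : k ≤ n - 1)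
    (hj1 : 2 ^ (k - 1) ≤ j) (hj2 : j ≤ 2 ^ k - 1) :
    cutLcmIdeal n K j = partitionIdeal n K (k + 1) :=
  cut_ideal_lcm_filtration_stabilizes_general n K k j hj1 hj2
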